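/- arXiv:1711.01139 — 4 statements merged into one kernel-verified Lean document; each statement's English description precedes it below -/
import Mathlib

section
/- Let y : [0,T] → ℝ^n be absolutely continuous and satisfy, for almost every t, (1/2) d/dt |y(t) - y_T|² + ργC₁|y(t) - y_T| ≤ C₂(|y(t) - y_T| + |y_T|)|y(t) - y_T|, where ρ, γ, C₁, C₂ > 0 and y_T ∈ ℝ^n. If ργC₁ > C₂|y_T| and (ργC₁ - C₂|y_T|)(C₂)^{-1}(1 - e^{-C₂ T}) ≥ |y(0) - y_T|, then y(T) = y_T. -/
/-!
Write `f t = ‖y t - y_T‖` and `A = ργC₁ - C₂‖y_T‖ > 0`, so that the hypothesis reads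
`⟪y', y - y_T⟫ ≤ C₂ f (f - A / C₂)`. While `f > 0`, `f` is differentiable with
`f' ≤ C₂ (f - A / C₂)`, hence `e^{-C₂ t} (f t - A / C₂)` is nonincreasing, and the bound on `f 0`
forces `f T ≤ 0`. If `y` reaches `y_T` earlier, `(f²)' ≤ 2 C₂ f²` keeps it there. The derivative
bounds hold only almost everywhere; monotonicity still follows by the fundamental theorem of
calculus applied to the a.e.-vanishing majorant `max g' 0` of the derivative.
-/

open RealInnerProductSpace MeasureTheory Set Real

theorem le_of_hasDerivWithinAt_of_ae_nonpos {g g' : ℝ → ℝ} {a b : ℝ} (hab : a ≤ b)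
    (hcont : ContinuousOn g (Icc a b))
    (hderiv : ∀ x ∈ Ioo a b, HasDerivWithinAt g (g' x) (Ioi x) x)
    (hle : ∀ᵐ x ∂volume.restrict (Ioo a b), g' x ≤ 0) :
    g b ≤ g a := by
  have hpos_part : (fun x => max (g' x) 0) =ᵐ[volume.restrict (Icc a b)] 0 := by
    rw [← Measure.restrict_congr_set Ioo_ae_eq_Icc]
    exact hle.mono fun x hx => max_eq_right hx
  have hint : ∫ x in a..b, max (g' x) 0 = 0 := by
    rw [intervalIntegral.integral_of_le hab,
      integral_congr_ae (ae_restrict_of_ae_restrict_of_subset Ioc_subset_Icc_self hpos_part)]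
    simp
  have := intervalIntegral.sub_le_integral_of_hasDeriv_right_of_le hab hcont hderiv
    ((integrable_zero _ _ _).congr hpos_part.symm) fun x _ => le_max_left _ _
  linarith

theorem exp_mul_sub_le_of_deriv_le {f f' : ℝ → ℝ} {a b : ℝ} (C B : ℝ) (hab : a ≤ b)
    (hcont : ContinuousOn f (Icc a b)) (hderiv : ∀ x ∈ Ioo a b, HasDerivAt f (f' x) x)
    (hle : ∀ᵐ x ∂volume.restrict (Ioo a b), f' x ≤ C * (f x - B)) :
    exp (-C * b) * (f b - B) ≤ exp (-C * a) * (f a - B) := by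
  refine le_of_hasDerivWithinAt_of_ae_nonpos (g := fun x => exp (-C * x) * (f x - B))
    (g' := fun x => -C * exp (-C * x) * (f x - B) + exp (-C * x) * f' x) hab (by fun_prop)
    (fun x hx => ?_) (hle.mono fun x hx => ?_)
  · have hexp : HasDerivAt (fun t => exp (-C * t)) (-C * exp (-C * x)) x := by
      simpa [mul_comm] using ((hasDerivAt_id x).const_mul (-C)).exp
    exact (hexp.mul ((hderiv x hx).sub_const B)).hasDerivWithinAt
  · have := mul_le_mul_of_nonneg_left hx (exp_pos (-C * x)).le
    linarith

theorem HasDerivAt.norm {E : Type*} [NormedAddCommGroup E] [InnerProductSpace ℝ E]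
    {f : ℝ → E} {f' : E} {x : ℝ} (hf : HasDerivAt f f' x) (h0 : f x ≠ 0) :
    HasDerivAt (‖f ·‖) (⟪f x, f'⟫ / ‖f x‖) x := by
  have hsq : ‖f x‖ ^ 2 ≠ 0 := pow_ne_zero 2 (norm_ne_zero_iff.2 h0)
  have := hf.norm_sq.sqrt hsq
  simp only [sqrt_sq (norm_nonneg _)] at this
  convert this using 1
  field_simp

section InnerDerivativeBound

variable {E : Type*} [NormedAddCommGroup E] [InnerProductSpace ℝ E] {y y' : ℝ → E} {z : E}
  {a b : ℝ}

theorem eq_of_eq_of_inner_deriv_le_mul_norm_sq (C : ℝ) (hab : a ≤ b)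
    (hcont : ContinuousOn y (Icc a b)) (hderiv : ∀ t ∈ Ioo a b, HasDerivAt y (y' t) t)
    (hle : ∀ᵐ t ∂volume.restrict (Ioo a b), ⟪y' t, y t - z⟫ ≤ C * ‖y t - z‖ ^ 2)
    (ha : y a = z) : y b = z := by
  have key := exp_mul_sub_le_of_deriv_le (f := fun t => ‖y t - z‖ ^ 2) (2 * C) 0 hab
    (by fun_prop) (fun t ht => ((hderiv t ht).sub_const z).norm_sq)
    (hle.mono fun t ht => by rw [real_inner_comm]; linarith)
  simp only [ha, sub_self, norm_zero, sub_zero] at key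
  have : ‖y b - z‖ ^ 2 ≤ 0 := nonpos_of_mul_nonpos_right (by simpa using key) (exp_pos _)
  simpa [sub_eq_zero] using this

theorem exp_mul_norm_sub_le_of_inner_deriv_le (C B : ℝ) (hab : a ≤ b)
    (hcont : ContinuousOn y (Icc a b)) (hderiv : ∀ t ∈ Ioo a b, HasDerivAt y (y' t) t)
    (hne : ∀ t ∈ Ioo a b, y t ≠ z)
    (hle : ∀ᵐ t ∂volume.restrict (Ioo a b),
      ⟪y' t, y t - z⟫ ≤ C * ‖y t - z‖ * (‖y t - z‖ - B)) :
    exp (-C * b) * (‖y b - z‖ - B) ≤ exp (-C * a) * (‖y a - z‖ - B) := by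
  refine exp_mul_sub_le_of_deriv_le C B hab (by fun_prop)
    (fun t ht => ((hderiv t ht).sub_const z).norm (sub_ne_zero.2 (hne t ht))) ?_
  filter_upwards [hle, ae_restrict_mem measurableSet_Ioo] with t ht htmem
  have hpos : 0 < ‖y t - z‖ := norm_pos_iff.2 (sub_ne_zero.2 (hne t htmem))
  rw [div_le_iff₀ hpos, real_inner_comm]
  linarith

end InnerDerivativeBound

theorem extinction_in_finite_time_general {n : ℕ}
    (T ρ γ C₁ C₂ : ℝ) (hT : 0 < T)
    (hC₂ : 0 < C₂)
    (yT : EuclideanSpace ℝ (Fin n))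
    (y y' : ℝ → EuclideanSpace ℝ (Fin n))
    (hderiv : ∀ t ∈ Set.Icc (0 : ℝ) T, HasDerivAt y (y' t) t)
    (hineq : ∀ᵐ t ∂(volume.restrict (Set.Ioo (0 : ℝ) T)),
      ⟪y' t, y t - yT⟫ + ρ * γ * C₁ * ‖y t - yT‖ ≤
        C₂ * (‖y t - yT‖ + ‖yT‖) * ‖y t - yT‖)
    (hbig : ρ * γ * C₁ > C₂ * ‖yT‖)
    (hinit : (ρ * γ * C₁ - C₂ * ‖yT‖) * C₂⁻¹ * (1 - Real.exp (-C₂ * T)) ≥ ‖y 0 - yT‖) :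
    y T = yT := by
  set B := (ρ * γ * C₁ - C₂ * ‖yT‖) * C₂⁻¹
  have hB : 0 < B := mul_pos (sub_pos.2 hbig) (inv_pos.2 hC₂)
  have hdecay : ∀ᵐ t ∂(volume.restrict (Ioo (0 : ℝ) T)),
      ⟪y' t, y t - yT⟫ ≤ C₂ * ‖y t - yT‖ * (‖y t - yT‖ - B) :=
    hineq.mono fun t ht => by
      linear_combination
        ht + (ρ * γ * C₁ - C₂ * ‖yT‖) * ‖y t - yT‖ * mul_inv_cancel₀ hC₂.ne'
  have hcont : ContinuousOn y (Icc 0 T) := fun t ht =>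
    (hderiv t ht).continuousAt.continuousWithinAt
  by_cases hhit : ∃ t₀ ∈ Ico 0 T, y t₀ = yT
  · obtain ⟨t₀, ⟨ht₀, ht₀T⟩, hyt₀⟩ := hhit
    refine eq_of_eq_of_inner_deriv_le_mul_norm_sq C₂ ht₀T.le
      (hcont.mono (Icc_subset_Icc_left ht₀)) (fun t ht => hderiv t ⟨ht₀.trans ht.1.le, ht.2.le⟩)
      ?_ hyt₀
    filter_upwards [ae_restrict_of_ae_restrict_of_subset (Ioo_subset_Ioo_left ht₀) hdecay]
      with t ht
    linear_combination ht + mul_nonneg (mul_nonneg hC₂.le (norm_nonneg (y t - yT))) hB.le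
  · push Not at hhit
    have key := exp_mul_norm_sub_le_of_inner_deriv_le C₂ B hT.le hcont
      (fun t ht => hderiv t (Ioo_subset_Icc_self ht)) (fun t ht => hhit t ⟨ht.1.le, ht.2⟩)
      hdecay
    rw [mul_zero, exp_zero, one_mul] at key
    have : exp (-C₂ * T) * ‖y T - yT‖ ≤ 0 := by linarith
    exact sub_eq_zero.1 (norm_le_zero_iff.1 (nonpos_of_mul_nonpos_right this (exp_pos _)))

/-- Deterministic extinction argument: if `y` satisfies the differential inequality
`(1/2) d/dt ‖y(t) - y_T‖² + ργC₁‖y(t) - y_T‖ ≤ C₂(‖y(t) - y_T‖ + ‖y_T‖)‖y(t) - y_T‖`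
a.e. on `(0,T)`, with `ργC₁ > C₂‖y_T‖` and
`(ργC₁ - C₂‖y_T‖) C₂⁻¹ (1 - e^{-C₂ T}) ≥ ‖y 0 - y_T‖`, then `y T = y_T`. -/
theorem extinction_in_finite_time {n : ℕ}
    (T ρ γ C₁ C₂ : ℝ) (hT : 0 < T) (hρ : 0 < ρ) (hγ : 0 < γ)
    (hC₁ : 0 < C₁) (hC₂ : 0 < C₂)
    (yT : EuclideanSpace ℝ (Fin n))
    (y y' : ℝ → EuclideanSpace ℝ (Fin n))
    (hderiv : ∀ t ∈ Set.Icc (0 : ℝ) T, HasDerivAt y (y' t) t)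
    (hineq : ∀ᵐ t ∂(volume.restrict (Set.Ioo (0 : ℝ) T)),
      ⟪y' t, y t - yT⟫ + ρ * γ * C₁ * ‖y t - yT‖ ≤
        C₂ * (‖y t - yT‖ + ‖yT‖) * ‖y t - yT‖)
    (hbig : ρ * γ * C₁ > C₂ * ‖yT‖)
    (hinit : (ρ * γ * C₁ - C₂ * ‖yT‖) * C₂⁻¹ * (1 - Real.exp (-C₂ * T)) ≥ ‖y 0 - yT‖) :
    y T = yT :=
  extinction_in_finite_time_general T ρ γ C₁ C₂ hT hC₂ yT y y' hderiv hineq hbig hinit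
end

section
/- Let A, B ∈ L(ℝ^n) with B invertible, let y ∈ ℝ^n, ρ > 0, and let X : [0,T] → ℝ^n be absolutely continuous satisfying dX/dt + A X + ρ B ξ(t) = 0 a.e. with ξ(t) ∈ sign(B*(X(t) - y)) a.e. If X₁, X₂ are two such solutions with X₁(0) = X₂(0), then X₁ ≡ X₂ on [0,T]. -/
/-!
For the difference `Z = X₁ - X₂` one has `⟪Z, Z'⟫ = -⟪Z, A Z⟫ - ρ ⟪B* Z, ξ₁ - ξ₂⟫ ≤ ‖A‖ ‖Z‖²`
a.e., since `B* Z = B*(X₁ - y) - B*(X₂ - y)` and the sign map is monotone. Gronwall's inequality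
for `‖Z‖²`, which vanishes at `0`, gives `Z ≡ 0`. As the equation holds only almost everywhere,
the fundamental theorem of calculus is applied to `‖Z‖²`, whose derivative is integrable because
`Z'` has linear growth a.e.
-/

open MeasureTheory

open Classical in
noncomputable def signSet {n : ℕ} (x : EuclideanSpace ℝ (Fin n)) : Set (EuclideanSpace ℝ (Fin n)) :=
  if x = 0 then {θ | ‖θ‖ ≤ 1} else {‖x‖⁻¹ • x}

open Set Real

section Gronwall

theorem intervalIntegrable_of_hasDerivAt_of_ae_norm_le {E : Type*} [NormedAddCommGroup E]
    [NormedSpace ℝ E] [CompleteSpace E] {f f' : ℝ → E} {a b C : ℝ} (hab : a ≤ b)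
    (hf : ∀ t ∈ Icc a b, HasDerivAt f (f' t) t)
    (hC : ∀ᵐ t ∂volume.restrict (Ioo a b), ‖f' t‖ ≤ C) :
    IntervalIntegrable f' volume a b := by
  refine IntervalIntegrable.mono_fun' (g := fun _ ↦ C) intervalIntegrable_const ?_ ?_ <;>
    rw [uIoc_of_le hab]
  · refine (stronglyMeasurable_deriv f).aestronglyMeasurable.congr ?_
    filter_upwards [ae_restrict_mem measurableSet_Ioc] with t ht
    exact (hf t (Ioc_subset_Icc_self ht)).deriv
  · rwa [Measure.restrict_congr_set Ioo_ae_eq_Ioc] at hC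

theorem le_of_hasDerivAt_of_ae_nonpos {g g' : ℝ → ℝ} {a b : ℝ} (hab : a ≤ b)
    (hg : ∀ t ∈ Icc a b, HasDerivAt g (g' t) t) (hg' : IntervalIntegrable g' volume a b)
    (hle : ∀ᵐ t ∂volume.restrict (Ioo a b), g' t ≤ 0) :
    g b ≤ g a := by
  have hFTC := intervalIntegral.integral_eq_sub_of_hasDerivAt (by rwa [uIcc_of_le hab]) hg'
  rw [← sub_nonpos, ← hFTC, intervalIntegral.integral_of_le hab]
  exact integral_nonpos_of_ae (by rwa [Measure.restrict_congr_set Ioo_ae_eq_Ioc] at hle)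

theorem le_mul_exp_of_hasDerivAt_of_ae_le {f f' : ℝ → ℝ} {a b K : ℝ}
    (hf : ∀ t ∈ Icc a b, HasDerivAt f (f' t) t) (hf' : IntervalIntegrable f' volume a b)
    (hle : ∀ᵐ t ∂volume.restrict (Ioo a b), f' t ≤ K * f t) :
    ∀ t ∈ Icc a b, f t ≤ f a * exp (K * (t - a)) := by
  intro t ht
  have hsub : Icc a t ⊆ Icc a b := Icc_subset_Icc_right ht.2
  set e : ℝ → ℝ := fun s ↦ exp (K * (a - s))
  have he : ∀ s, HasDerivAt e (-K * e s) s := fun s ↦ by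
    simpa [e, mul_comm] using ((hasDerivAt_id s).const_sub a |>.const_mul K).exp
  -- integrating factor: `(e * f)' = e * (f' - K f) ≤ 0` a.e.
  have hdecr : e t * f t ≤ e a * f a := by
    have hderiv : ∀ s ∈ Icc a t,
        HasDerivAt (fun s ↦ e s * f s) (e s * f' s - K * e s * f s) s := fun s hs ↦
      ((he s).mul (hf s (hsub hs))).congr_deriv (by ring)
    refine le_of_hasDerivAt_of_ae_nonpos ht.1 hderiv ?_ ?_
    · have hcont : ContinuousOn f (uIcc a t) := fun s hs ↦
        (hf s (hsub (by rwa [uIcc_of_le ht.1] at hs))).continuousAt.continuousWithinAt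
      refine ((hf'.mono_set ?_).continuousOn_mul (by fun_prop)).sub
        (((continuous_const.mul (by fun_prop)).continuousOn.mul hcont).intervalIntegrable)
      rw [uIcc_of_le ht.1, uIcc_of_le (ht.1.trans ht.2)]
      exact hsub
    · filter_upwards [ae_restrict_of_ae_restrict_of_subset (Ioo_subset_Ioo_right ht.2) hle]
        with s hs
      nlinarith [exp_pos (K * (a - s))]
  have hea : e a = 1 := by simp [e]
  have het : e t * exp (K * (t - a)) = 1 := by rw [← exp_add, ← exp_zero]; ring_nf
  calc f t = e t * f t * exp (K * (t - a)) := by rw [mul_right_comm, het, one_mul]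
    _ ≤ f a * exp (K * (t - a)) := by
      rw [hea, one_mul] at hdecr
      exact mul_le_mul_of_nonneg_right hdecr (exp_pos _).le

theorem eq_zero_of_hasDerivAt_of_inner_le {E : Type*} [NormedAddCommGroup E]
    [InnerProductSpace ℝ E] {Z Z' : ℝ → E} {a b K L C : ℝ}
    (hZ : ∀ t ∈ Icc a b, HasDerivAt Z (Z' t) t)
    (hgrowth : ∀ᵐ t ∂volume.restrict (Ioo a b), ‖Z' t‖ ≤ L * ‖Z t‖ + C)
    (hinner : ∀ᵐ t ∂volume.restrict (Ioo a b), inner ℝ (Z t) (Z' t) ≤ K * ‖Z t‖ ^ 2)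
    (h0 : Z a = 0) :
    ∀ t ∈ Icc a b, Z t = 0 := by
  intro t ht
  have hnorm_sq : ∀ s ∈ Icc a b,
      HasDerivAt (‖Z ·‖ ^ 2) (2 * inner ℝ (Z s) (Z' s)) s := fun s hs ↦ (hZ s hs).norm_sq
  obtain ⟨M, hM⟩ := isCompact_Icc.exists_bound_of_continuousOn
    fun s hs ↦ (hZ s hs).continuousAt.continuousWithinAt
  have hint : IntervalIntegrable (fun s ↦ 2 * inner ℝ (Z s) (Z' s)) volume a b := by
    refine intervalIntegrable_of_hasDerivAt_of_ae_norm_le (C := 2 * M * (|L| * M + C))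
      (ht.1.trans ht.2) hnorm_sq ?_
    filter_upwards [hgrowth, ae_restrict_mem measurableSet_Ioo] with s hs hsab
    have hZs := hM s (Ioo_subset_Icc_self hsab)
    have hZ's : ‖Z' s‖ ≤ |L| * M + C := by
      nlinarith [mul_le_mul_of_nonneg_right (le_abs_self L) (norm_nonneg (Z s)),
        mul_le_mul_of_nonneg_left hZs (abs_nonneg L)]
    calc ‖2 * inner ℝ (Z s) (Z' s)‖ = 2 * |inner ℝ (Z s) (Z' s)| := by
          rw [norm_mul, Real.norm_eq_abs, Real.norm_eq_abs, abs_two]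
      _ ≤ 2 * (‖Z s‖ * ‖Z' s‖) := by gcongr; exact abs_real_inner_le_norm _ _
      _ ≤ 2 * M * (|L| * M + C) := by
          rw [mul_assoc]
          exact mul_le_mul_of_nonneg_left
            (mul_le_mul hZs hZ's (norm_nonneg _) ((norm_nonneg _).trans hZs)) two_pos.le
  have hgronwall := le_mul_exp_of_hasDerivAt_of_ae_le (K := 2 * K) hnorm_sq hint
    (by filter_upwards [hinner] with s hs; linarith) t ht
  simp only [h0, norm_zero, zero_pow two_ne_zero, zero_mul] at hgronwall
  exact norm_eq_zero.mp (pow_eq_zero_iff two_ne_zero |>.mp (le_antisymm hgronwall (by positivity)))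

end Gronwall

section SignSet

variable {n : ℕ}

theorem norm_le_one_of_mem_signSet {x θ : EuclideanSpace ℝ (Fin n)} (h : θ ∈ signSet x) :
    ‖θ‖ ≤ 1 := by
  unfold signSet at h
  split_ifs at h with hx
  · exact h
  · rw [mem_singleton_iff.mp h, norm_smul, norm_inv, norm_norm,
      inv_mul_cancel₀ (norm_ne_zero_iff.mpr hx)]

theorem inner_eq_norm_of_mem_signSet {x θ : EuclideanSpace ℝ (Fin n)} (h : θ ∈ signSet x) :
    inner ℝ θ x = ‖x‖ := by
  unfold signSet at h
  split_ifs at h with hx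
  · simp [hx]
  · rw [mem_singleton_iff.mp h, real_inner_smul_left, real_inner_self_eq_norm_sq]
    field_simp [norm_ne_zero_iff.mpr hx]

theorem inner_sub_sub_nonneg_of_mem_signSet {x₁ x₂ θ₁ θ₂ : EuclideanSpace ℝ (Fin n)}
    (h₁ : θ₁ ∈ signSet x₁) (h₂ : θ₂ ∈ signSet x₂) :
    0 ≤ inner ℝ (θ₁ - θ₂) (x₁ - x₂) := by
  have h₁₂ := (real_inner_le_norm θ₁ x₂).trans
    (mul_le_of_le_one_left (norm_nonneg _) (norm_le_one_of_mem_signSet h₁))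
  have h₂₁ := (real_inner_le_norm θ₂ x₁).trans
    (mul_le_of_le_one_left (norm_nonneg _) (norm_le_one_of_mem_signSet h₂))
  rw [inner_sub_left, inner_sub_right, inner_sub_right, inner_eq_norm_of_mem_signSet h₁,
    inner_eq_norm_of_mem_signSet h₂]
  linarith

end SignSet

section ClosedLoop

variable {n : ℕ} {A B : EuclideanSpace ℝ (Fin n) →L[ℝ] EuclideanSpace ℝ (Fin n)} {ρ : ℝ}
  {x₁ x₂ ξ₁ ξ₂ y : EuclideanSpace ℝ (Fin n)}

theorem sub_eq_of_add_add_smul_eq_zero {v₁ v₂ : EuclideanSpace ℝ (Fin n)}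
    (e₁ : v₁ + A x₁ + ρ • B ξ₁ = 0) (e₂ : v₂ + A x₂ + ρ • B ξ₂ = 0) :
    v₁ - v₂ = -A (x₁ - x₂) - ρ • B (ξ₁ - ξ₂) := by
  simp only [map_sub, smul_sub]
  linear_combination (norm := module) e₁ - e₂

theorem inner_closedLoop_sub_le (hρ : 0 ≤ ρ)
    (h₁ : ξ₁ ∈ signSet (ContinuousLinearMap.adjoint B (x₁ - y)))
    (h₂ : ξ₂ ∈ signSet (ContinuousLinearMap.adjoint B (x₂ - y))) :
    inner ℝ (x₁ - x₂) (-A (x₁ - x₂) - ρ • B (ξ₁ - ξ₂)) ≤ ‖A‖ * ‖x₁ - x₂‖ ^ 2 := by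
  have hmono : 0 ≤ inner ℝ (x₁ - x₂) (B (ξ₁ - ξ₂)) := by
    rw [real_inner_comm, ← ContinuousLinearMap.adjoint_inner_right,
      show x₁ - x₂ = (x₁ - y) - (x₂ - y) by abel, map_sub]
    exact inner_sub_sub_nonneg_of_mem_signSet h₁ h₂
  have hA : -inner ℝ (x₁ - x₂) (A (x₁ - x₂)) ≤ ‖A‖ * ‖x₁ - x₂‖ ^ 2 :=
    calc _ ≤ ‖x₁ - x₂‖ * ‖A (x₁ - x₂)‖ := (neg_le_abs _).trans (abs_real_inner_le_norm _ _)
      _ ≤ ‖x₁ - x₂‖ * (‖A‖ * ‖x₁ - x₂‖) := by gcongr; exact A.le_opNorm _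
      _ = ‖A‖ * ‖x₁ - x₂‖ ^ 2 := by ring
  rw [inner_sub_right, inner_neg_right, real_inner_smul_right]
  nlinarith [mul_nonneg hρ hmono]

theorem norm_closedLoop_sub_le (hρ : 0 ≤ ρ)
    (h₁ : ξ₁ ∈ signSet (ContinuousLinearMap.adjoint B (x₁ - y)))
    (h₂ : ξ₂ ∈ signSet (ContinuousLinearMap.adjoint B (x₂ - y))) :
    ‖-A (x₁ - x₂) - ρ • B (ξ₁ - ξ₂)‖ ≤ ‖A‖ * ‖x₁ - x₂‖ + 2 * ρ * ‖B‖ := by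
  have hξ : ‖ξ₁ - ξ₂‖ ≤ 2 := (norm_sub_le _ _).trans (by
    linarith [norm_le_one_of_mem_signSet h₁, norm_le_one_of_mem_signSet h₂])
  calc _ ≤ ‖-A (x₁ - x₂)‖ + ‖ρ • B (ξ₁ - ξ₂)‖ := norm_sub_le _ _
    _ = ‖A (x₁ - x₂)‖ + ρ * ‖B (ξ₁ - ξ₂)‖ := by rw [norm_neg, norm_smul, Real.norm_of_nonneg hρ]
    _ ≤ ‖A‖ * ‖x₁ - x₂‖ + ρ * (‖B‖ * 2) := by
        gcongr
        · exact A.le_opNorm _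
        · exact (B.le_opNorm _).trans (by gcongr)
    _ = ‖A‖ * ‖x₁ - x₂‖ + 2 * ρ * ‖B‖ := by ring

end ClosedLoop

theorem closed_loop_uniqueness_general {n : ℕ}
    (T ρ : ℝ) (hρ : 0 < ρ)
    (A B : EuclideanSpace ℝ (Fin n) →L[ℝ] EuclideanSpace ℝ (Fin n))
    (y : EuclideanSpace ℝ (Fin n))
    (X₁ X₂ X₁' X₂' ξ₁ ξ₂ : ℝ → EuclideanSpace ℝ (Fin n))
    (hd₁ : ∀ t ∈ Set.Icc (0 : ℝ) T, HasDerivAt X₁ (X₁' t) t)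
    (hd₂ : ∀ t ∈ Set.Icc (0 : ℝ) T, HasDerivAt X₂ (X₂' t) t)
    (hξ₁ : ∀ᵐ t ∂(volume.restrict (Set.Ioo (0 : ℝ) T)),
      ξ₁ t ∈ signSet (ContinuousLinearMap.adjoint B (X₁ t - y)) ∧
      X₁' t + A (X₁ t) + ρ • B (ξ₁ t) = 0)
    (hξ₂ : ∀ᵐ t ∂(volume.restrict (Set.Ioo (0 : ℝ) T)),
      ξ₂ t ∈ signSet (ContinuousLinearMap.adjoint B (X₂ t - y)) ∧
      X₂' t + A (X₂ t) + ρ • B (ξ₂ t) = 0)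
    (h0 : X₁ 0 = X₂ 0) :
    ∀ t ∈ Set.Icc (0 : ℝ) T, X₁ t = X₂ t := by
  intro t ht
  refine sub_eq_zero.mp <| eq_zero_of_hasDerivAt_of_inner_le (Z := fun s ↦ X₁ s - X₂ s)
    (K := ‖A‖) (L := ‖A‖) (C := 2 * ρ * ‖B‖) (fun s hs ↦ (hd₁ s hs).sub (hd₂ s hs))
    ?_ ?_ (sub_eq_zero.mpr h0) t ht
  · filter_upwards [hξ₁, hξ₂] with s ⟨m₁, e₁⟩ ⟨m₂, e₂⟩
    rw [sub_eq_of_add_add_smul_eq_zero e₁ e₂]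
    exact norm_closedLoop_sub_le hρ.le m₁ m₂
  · filter_upwards [hξ₁, hξ₂] with s ⟨m₁, e₁⟩ ⟨m₂, e₂⟩
    rw [sub_eq_of_add_add_smul_eq_zero e₁ e₂]
    exact inner_closedLoop_sub_le hρ.le m₁ m₂

/-- Uniqueness for the deterministic closed loop system
`dX/dt + AX + ρ B ξ = 0`, `ξ(t) ∈ sign(B*(X(t) - y))`. -/
theorem closed_loop_uniqueness {n : ℕ}
    (T ρ : ℝ) (hT : 0 < T) (hρ : 0 < ρ)
    (A B : EuclideanSpace ℝ (Fin n) →L[ℝ] EuclideanSpace ℝ (Fin n))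
    (hB : Function.Bijective B)
    (y : EuclideanSpace ℝ (Fin n))
    (X₁ X₂ X₁' X₂' ξ₁ ξ₂ : ℝ → EuclideanSpace ℝ (Fin n))
    (hd₁ : ∀ t ∈ Set.Icc (0 : ℝ) T, HasDerivAt X₁ (X₁' t) t)
    (hd₂ : ∀ t ∈ Set.Icc (0 : ℝ) T, HasDerivAt X₂ (X₂' t) t)
    (hξ₁ : ∀ᵐ t ∂(volume.restrict (Set.Ioo (0 : ℝ) T)),
      ξ₁ t ∈ signSet (ContinuousLinearMap.adjoint B (X₁ t - y)) ∧
      X₁' t + A (X₁ t) + ρ • B (ξ₁ t) = 0)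
    (hξ₂ : ∀ᵐ t ∂(volume.restrict (Set.Ioo (0 : ℝ) T)),
      ξ₂ t ∈ signSet (ContinuousLinearMap.adjoint B (X₂ t - y)) ∧
      X₂' t + A (X₂ t) + ρ • B (ξ₂ t) = 0)
    (h0 : X₁ 0 = X₂ 0) :
    ∀ t ∈ Set.Icc (0 : ℝ) T, X₁ t = X₂ t :=
  closed_loop_uniqueness_general T ρ hρ A B y X₁ X₂ X₁' X₂' ξ₁ ξ₂ hd₁ hd₂ hξ₁ hξ₂ h0
end

section
/- Let F : ℝ^n → ℝ^n be maximal monotone with bounded values (|η| ≤ M for all η ∈ F(x), all x), and let F_λ denote its Yosida approximation. Let x_λ solve the ODE dx_λ/dt + A x_λ + F_λ(x_λ) = 0, x_λ(0) = x, with A ∈ L(ℝ^n). Then for all λ, μ > 0 and t ∈ [0,T]: |x_λ(t) - x_μ(t)|² ≤ C(λ + μ) for a constant C depending only on M, ‖A‖, T; hence (x_λ) converges uniformly on [0,T] as λ → 0. -/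
/-!
If `z = J_λ z + λ ξ` with `ξ = F_λ z ∈ F (J_λ z)`, then monotonicity of `F` and the bound `M`
give `⟪F_λ u - F_μ v, u - v⟫ ≥ -(λ + μ) M²`. Hence the energy `‖x_λ - x_μ‖²` grows at rate at
most `2‖A‖ ‖x_λ - x_μ‖² + 2(λ + μ) M²` and starts at `0`, so Grönwall bounds it by a multiple
of `λ + μ` on `[0, T]`; in particular `(x_λ)` is uniformly Cauchy as `λ → 0⁺`.
-/

open RealInnerProductSpace
open Set Filter Topology

theorem mem_and_add_smul_eq_of_eq_inv_smul_sub {k V : Type*} [Field k] [AddCommGroup V]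
    [Module k V] {S : Set V} {j z φ : V} {c : k} (hc : c ≠ 0)
    (h : ∃ ξ ∈ S, j + c • ξ = z) (hφ : φ = c⁻¹ • (z - j)) : φ ∈ S ∧ j + c • φ = z := by
  obtain ⟨ξ, hξS, hξ⟩ := h
  rw [hφ, ← eq_sub_of_add_eq' hξ, inv_smul_smul₀ hc]
  exact ⟨hξS, hξ⟩

section InnerProductSpace

variable {E : Type*} [NormedAddCommGroup E] [InnerProductSpace ℝ E]

theorem neg_mul_sq_le_inner_yosida {ξ η j k : E} {lam mu M : ℝ} (hlam : 0 ≤ lam) (hmu : 0 ≤ mu)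
    (hξ : ‖ξ‖ ≤ M) (hη : ‖η‖ ≤ M) (hmono : 0 ≤ ⟪ξ - η, j - k⟫) :
    -((lam + mu) * M ^ 2) ≤ ⟪ξ - η, (j + lam • ξ) - (k + mu • η)⟫ := by
  have hξη : ⟪ξ, η⟫ ≤ M ^ 2 := calc
    ⟪ξ, η⟫ ≤ ‖ξ‖ * ‖η‖ := real_inner_le_norm ξ η
    _ ≤ M * M := mul_le_mul hξ hη (norm_nonneg η) ((norm_nonneg ξ).trans hξ)
    _ = M ^ 2 := (sq M).symm
  have hsplit : ⟪ξ - η, (j + lam • ξ) - (k + mu • η)⟫ =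
      ⟪ξ - η, j - k⟫ + lam * ‖ξ‖ ^ 2 + mu * ‖η‖ ^ 2 - (lam + mu) * ⟪ξ, η⟫ := by
    rw [add_sub_add_comm, inner_add_right]
    simp only [inner_sub_left, inner_sub_right, real_inner_smul_right, real_inner_self_eq_norm_sq,
      real_inner_comm ξ η]
    ring
  rw [hsplit]
  nlinarith [mul_le_mul_of_nonneg_left hξη (add_nonneg hlam hmu)]

theorem norm_sq_le_gronwallBound_of_inner_deriv_right_le {f f' : ℝ → E} {δ K ε a b : ℝ}
    (hf : ContinuousOn f (Icc a b)) (hf' : ∀ x ∈ Ico a b, HasDerivWithinAt f (f' x) (Ici x) x)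
    (ha : ‖f a‖ ^ 2 ≤ δ) (bound : ∀ x ∈ Ico a b, ⟪f x, f' x⟫ ≤ K * ‖f x‖ ^ 2 + ε) :
    ∀ x ∈ Icc a b, ‖f x‖ ^ 2 ≤ gronwallBound δ (2 * K) (2 * ε) (x - a) :=
  le_gronwallBound_of_liminf_deriv_right_le (hf.norm.pow 2)
    (fun x hx _r hr => by
      simpa only [slope_def_field, div_eq_inv_mul] using
        (hf' x hx).norm_sq.liminf_right_slope_le hr)
    ha (fun x hx => by linarith [bound x hx])

theorem norm_sub_sq_le_gronwallBound_of_hasDerivAt {x₁ x₂ : ℝ → E} {A : E →L[ℝ] E}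
    {G₁ G₂ : E → E} {ε t : ℝ}
    (h₁ : ∀ t, HasDerivAt x₁ (-(A (x₁ t)) - G₁ (x₁ t)) t)
    (h₂ : ∀ t, HasDerivAt x₂ (-(A (x₂ t)) - G₂ (x₂ t)) t) (h0 : x₁ 0 = x₂ 0)
    (hG : ∀ u v, -ε ≤ ⟪G₁ u - G₂ v, u - v⟫) (ht : 0 ≤ t) :
    ‖x₁ t - x₂ t‖ ^ 2 ≤ gronwallBound 0 (2 * ‖A‖) (2 * ε) t := by
  have hderiv : ∀ t, HasDerivAt (x₁ - x₂)
      (-(A (x₁ t - x₂ t)) - (G₁ (x₁ t) - G₂ (x₂ t))) t := fun t => by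
    convert (h₁ t).sub (h₂ t) using 1
    rw [map_sub]
    abel
  have hA : ∀ y : E, -⟪y, A y⟫ ≤ ‖A‖ * ‖y‖ ^ 2 := fun y => calc
    -⟪y, A y⟫ ≤ ‖y‖ * ‖A y‖ := (neg_le_abs _).trans (abs_real_inner_le_norm y (A y))
    _ ≤ ‖y‖ * (‖A‖ * ‖y‖) := by gcongr; exact A.le_opNorm y
    _ = ‖A‖ * ‖y‖ ^ 2 := by ring
  have := norm_sq_le_gronwallBound_of_inner_deriv_right_le (δ := 0) (K := ‖A‖) (ε := ε)
    (fun s _ => (hderiv s).continuousAt.continuousWithinAt)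
    (fun s _ => (hderiv s).hasDerivWithinAt)
    (by simp [h0])
    (fun s _ => by
      rw [Pi.sub_apply, inner_sub_right, inner_neg_right]
      linarith [hA (x₁ s - x₂ s), hG (x₁ s) (x₂ s),
        real_inner_comm (x₁ s - x₂ s) (G₁ (x₁ s) - G₂ (x₂ s))])
    t ⟨ht, le_rfl⟩
  simpa only [sub_zero, Pi.sub_apply] using this

end InnerProductSpace

theorem gronwallBound_zero_le_mul {K ε t T : ℝ} (hK : 0 ≤ K) (hε : 0 ≤ ε) (htT : t ≤ T) :
    gronwallBound 0 K ε t ≤ ε * gronwallBound 0 K 1 T := calc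
  gronwallBound 0 K ε t ≤ gronwallBound 0 K ε T := gronwallBound_mono le_rfl hε hK htT
  _ = ε * gronwallBound 0 K 1 T := by unfold gronwallBound; split_ifs <;> ring

theorem uniformCauchySeqOn_nhdsGT_of_norm_sub_sq_le {α E : Type*} [SeminormedAddCommGroup E]
    {X : ℝ → α → E} {s : Set α} {C : ℝ}
    (h : ∀ lam mu, 0 < lam → 0 < mu → ∀ t ∈ s, ‖X lam t - X mu t‖ ^ 2 ≤ C * (lam + mu)) :
    UniformCauchySeqOn X (𝓝[>] 0) s := by
  intro u hu
  obtain ⟨ε, hε, hdist⟩ := Metric.mem_uniformity_dist.1 hu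
  have hlim : Tendsto (fun p : ℝ × ℝ => C * (p.1 + p.2)) (𝓝[>] 0 ×ˢ 𝓝[>] 0) (𝓝 0) := by
    have : Tendsto (fun p : ℝ × ℝ => C * (p.1 + p.2)) (𝓝 (0, 0)) (𝓝 (C * (0 + 0))) :=
      (continuous_const.mul (continuous_fst.add continuous_snd)).tendsto _
    rw [add_zero, mul_zero, nhds_prod_eq] at this
    exact this.mono_left (prod_mono nhdsWithin_le_nhds nhdsWithin_le_nhds)
  filter_upwards [prod_mem_prod self_mem_nhdsWithin self_mem_nhdsWithin,
    hlim (Iio_mem_nhds (pow_pos hε 2))] with p ⟨hlam, hmu⟩ hsmall t ht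
  apply hdist
  rw [dist_eq_norm]
  exact lt_of_pow_lt_pow_left₀ 2 hε.le ((h p.1 p.2 hlam hmu t ht).trans_lt hsmall)

theorem UniformCauchySeqOn.exists_tendstoUniformlyOn {ι α β : Type*} [UniformSpace β]
    [CompleteSpace β] [Nonempty β] {F : ι → α → β} {p : Filter ι} [p.NeBot] {s : Set α}
    (hF : UniformCauchySeqOn F p s) : ∃ f, TendstoUniformlyOn F f p s :=
  ⟨fun x => limUnder p (F · x), hF.tendstoUniformlyOn_of_tendsto fun _ hx =>
    tendsto_nhds_limUnder (cauchy_map_iff_exists_tendsto.1 (hF.cauchy_map hx))⟩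

theorem yosida_ode_convergence_general {n : ℕ}
    (T M : ℝ) (hT : 0 < T)
    (A : EuclideanSpace ℝ (Fin n) →L[ℝ] EuclideanSpace ℝ (Fin n))
    (F : EuclideanSpace ℝ (Fin n) → Set (EuclideanSpace ℝ (Fin n)))
    (hmono : ∀ x₁ x₂ ξ₁ ξ₂, ξ₁ ∈ F x₁ → ξ₂ ∈ F x₂ → ⟪ξ₁ - ξ₂, x₁ - x₂⟫ ≥ 0)
    (hbdd : ∀ x, ∀ ξ ∈ F x, ‖ξ‖ ≤ M)
    -- J lam is the resolvent (I + lam F)⁻¹ and Flam its Yosida approximation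
    (J : ℝ → EuclideanSpace ℝ (Fin n) → EuclideanSpace ℝ (Fin n))
    (hJ : ∀ lam : ℝ, 0 < lam → ∀ z, ∃ ξ ∈ F (J lam z), J lam z + lam • ξ = z)
    (Flam : ℝ → EuclideanSpace ℝ (Fin n) → EuclideanSpace ℝ (Fin n))
    (hFlam : ∀ lam : ℝ, 0 < lam → ∀ z, Flam lam z = lam⁻¹ • (z - J lam z))
    (x : EuclideanSpace ℝ (Fin n))
    (X : ℝ → ℝ → EuclideanSpace ℝ (Fin n))
    (hode : ∀ lam : ℝ, 0 < lam → ∀ t : ℝ,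
      HasDerivAt (X lam) (-(A (X lam t)) - Flam lam (X lam t)) t)
    (hinit : ∀ lam : ℝ, 0 < lam → X lam 0 = x) :
    (∃ C : ℝ, 0 < C ∧ ∀ lam mu : ℝ, 0 < lam → 0 < mu → ∀ t ∈ Set.Icc (0 : ℝ) T,
      ‖X lam t - X mu t‖ ^ 2 ≤ C * (lam + mu)) ∧
    (∃ Xlim : ℝ → EuclideanSpace ℝ (Fin n),
      TendstoUniformlyOn (fun lam => X lam) Xlim (nhdsWithin 0 (Set.Ioi 0))
        (Set.Icc 0 T)) := by
  have hinner : ∀ lam mu, 0 < lam → 0 < mu → ∀ u v,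
      -((lam + mu) * M ^ 2) ≤ ⟪Flam lam u - Flam mu v, u - v⟫ := by
    intro lam mu hlam hmu u v
    obtain ⟨hξ, hu⟩ :=
      mem_and_add_smul_eq_of_eq_inv_smul_sub hlam.ne' (hJ lam hlam u) (hFlam lam hlam u)
    obtain ⟨hη, hv⟩ :=
      mem_and_add_smul_eq_of_eq_inv_smul_sub hmu.ne' (hJ mu hmu v) (hFlam mu hmu v)
    have := neg_mul_sq_le_inner_yosida hlam.le hmu.le (hbdd _ _ hξ) (hbdd _ _ hη)
      (hmono _ _ _ _ hξ hη)
    rwa [hu, hv] at this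
  set g := gronwallBound 0 (2 * ‖A‖) 1 T
  have hg : 0 ≤ g := gronwallBound_x0 0 (2 * ‖A‖) 1 ▸
    gronwallBound_mono le_rfl zero_le_one (by positivity) hT.le
  have hest : ∀ lam mu, 0 < lam → 0 < mu → ∀ t ∈ Icc 0 T,
      ‖X lam t - X mu t‖ ^ 2 ≤ (2 * M ^ 2 * g + 1) * (lam + mu) := by
    intro lam mu hlam hmu t ht
    calc ‖X lam t - X mu t‖ ^ 2
        ≤ gronwallBound 0 (2 * ‖A‖) (2 * ((lam + mu) * M ^ 2)) t :=
          norm_sub_sq_le_gronwallBound_of_hasDerivAt (hode lam hlam) (hode mu hmu)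
            (by rw [hinit lam hlam, hinit mu hmu]) (hinner lam mu hlam hmu) ht.1
      _ ≤ 2 * ((lam + mu) * M ^ 2) * g :=
          gronwallBound_zero_le_mul (by positivity) (by positivity) ht.2
      _ ≤ (2 * M ^ 2 * g + 1) * (lam + mu) := by nlinarith
  exact ⟨⟨_, by positivity, hest⟩,
    (uniformCauchySeqOn_nhdsGT_of_norm_sub_sq_le hest).exists_tendstoUniformlyOn⟩

/-- Yosida approximation estimate: if `x_λ` solves `dx_λ/dt + A x_λ + F_λ(x_λ) = 0`,
`x_λ(0) = x`, where `F_λ` is the Yosida approximation of a maximal monotone map `F` with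
values bounded by `M`, then `‖x_λ(t) - x_μ(t)‖² ≤ C(λ + μ)` on `[0,T]`, and `x_λ`
converges uniformly on `[0,T]` as `λ → 0`. -/
theorem yosida_ode_convergence {n : ℕ}
    (T M : ℝ) (hT : 0 < T) (hM : 0 ≤ M)
    (A : EuclideanSpace ℝ (Fin n) →L[ℝ] EuclideanSpace ℝ (Fin n))
    (F : EuclideanSpace ℝ (Fin n) → Set (EuclideanSpace ℝ (Fin n)))
    (hmono : ∀ x₁ x₂ ξ₁ ξ₂, ξ₁ ∈ F x₁ → ξ₂ ∈ F x₂ → ⟪ξ₁ - ξ₂, x₁ - x₂⟫ ≥ 0)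
    (hbdd : ∀ x, ∀ ξ ∈ F x, ‖ξ‖ ≤ M)
    -- J lam is the resolvent (I + lam F)⁻¹ and Flam its Yosida approximation
    (J : ℝ → EuclideanSpace ℝ (Fin n) → EuclideanSpace ℝ (Fin n))
    (hJ : ∀ lam : ℝ, 0 < lam → ∀ z, ∃ ξ ∈ F (J lam z), J lam z + lam • ξ = z)
    (Flam : ℝ → EuclideanSpace ℝ (Fin n) → EuclideanSpace ℝ (Fin n))
    (hFlam : ∀ lam : ℝ, 0 < lam → ∀ z, Flam lam z = lam⁻¹ • (z - J lam z))
    (x : EuclideanSpace ℝ (Fin n))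
    (X : ℝ → ℝ → EuclideanSpace ℝ (Fin n))
    (hode : ∀ lam : ℝ, 0 < lam → ∀ t : ℝ,
      HasDerivAt (X lam) (-(A (X lam t)) - Flam lam (X lam t)) t)
    (hinit : ∀ lam : ℝ, 0 < lam → X lam 0 = x) :
    (∃ C : ℝ, 0 < C ∧ ∀ lam mu : ℝ, 0 < lam → 0 < mu → ∀ t ∈ Set.Icc (0 : ℝ) T,
      ‖X lam t - X mu t‖ ^ 2 ≤ C * (lam + mu)) ∧
    (∃ Xlim : ℝ → EuclideanSpace ℝ (Fin n),
      TendstoUniformlyOn (fun lam => X lam) Xlim (nhdsWithin 0 (Set.Ioi 0))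
        (Set.Icc 0 T)) :=
  yosida_ode_convergence_general T M hT A F hmono hbdd J hJ Flam hFlam x X hode hinit
end

section
/- Let C* > 0 and let f : [0,∞) → [0,∞) satisfy, for all 0 ≤ s ≤ t: e^{-C*t} f(t) + K ∫_s^t e^{-C*r} 1_{f(r) ≠ 0} dr ≤ e^{-C*s} f(s) + (e^{-C*s} - e^{-C*t}) Y, where K > 0, Y ≥ 0 are constants. If f is continuous and f(t₀) = 0 for some t₀, then f(t) = 0 for all t ≥ t₀ (provided K > C* Y). -/
/-!
Let `s` be the last zero of `f` in `[t₀, t]`. If `s < t`, then `f ≠ 0` on `(s, t]`, so the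
indicator integral over `[s, t]` is the full integral `(e^{-Cs} - e^{-Ct}) / C`, and the
inequality from `s` to `t` gives `e^{-Ct} f(t) ≤ (e^{-Cs} - e^{-Ct}) (Y - K / C) < 0`,
contradicting `f ≥ 0`.
-/

open Real Set

theorem integral_exp_neg_mul {C : ℝ} (hC : C ≠ 0) (a b : ℝ) :
    ∫ r in a..b, exp (-C * r) = (exp (-C * a) - exp (-C * b)) / C := by
  rw [intervalIntegral.integral_comp_mul_left exp (neg_ne_zero.mpr hC), integral_exp, smul_eq_mul]
  field_simp
  ring

theorem IsClosed.exists_mem_Icc_forall_Ioc_notMem {α : Type*} [ConditionallyCompleteLinearOrder α]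
    [TopologicalSpace α] [OrderTopology α] {S : Set α} (hS : IsClosed S) {a t : α}
    (ha : a ∈ S) (hat : a ≤ t) : ∃ s ∈ Icc a t, s ∈ S ∧ ∀ r ∈ Ioc s t, r ∉ S := by
  obtain ⟨s, ⟨hs, hsS⟩, hmax⟩ :=
    (isCompact_Icc.inter_right hS).exists_isGreatest ⟨a, ⟨le_rfl, hat⟩, ha⟩
  exact ⟨s, hs, hsS, fun r hr hrS => hr.1.not_ge (hmax ⟨⟨hs.1.trans hr.1.le, hr.2⟩, hrS⟩)⟩

theorem intervalIntegral.integral_mul_ite_of_forall_Ioc {g : ℝ → ℝ} {p : ℝ → Prop}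
    [DecidablePred p] {a b : ℝ} (hab : a ≤ b) (hp : ∀ r ∈ Ioc a b, p r) :
    ∫ r in a..b, g r * (if p r then 1 else 0) = ∫ r in a..b, g r := by
  refine intervalIntegral.integral_congr_ae (Filter.Eventually.of_forall fun r hr => ?_)
  rw [uIoc_of_le hab] at hr
  simp [hp r hr]

theorem absorption_general
    (C K Y : ℝ) (hC : 0 < C)
    (f : ℝ → ℝ) (hcont : Continuous f) (hnonneg : ∀ t, 0 ≤ t → 0 ≤ f t)
    (hineq : ∀ s t : ℝ, 0 ≤ s → s ≤ t →
      Real.exp (-C * t) * f t +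
        K * ∫ r in s..t, Real.exp (-C * r) * (if f r ≠ 0 then 1 else 0) ≤
      Real.exp (-C * s) * f s + (Real.exp (-C * s) - Real.exp (-C * t)) * Y)
    (hKY : K > C * Y)
    (t₀ : ℝ) (ht₀ : 0 ≤ t₀) (hf₀ : f t₀ = 0) :
    ∀ t, t₀ ≤ t → f t = 0 := by
  intro t ht
  by_contra hft
  obtain ⟨s, ⟨ht₀s, hst⟩, hfs, hne⟩ :=
    (isClosed_singleton.preimage hcont).exists_mem_Icc_forall_Ioc_notMem (a := t₀) hf₀ ht
  have hlt : s < t := hst.lt_of_ne (by rintro rfl; exact hft hfs)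
  have hineq_st := hineq s t (ht₀.trans ht₀s) hst
  rw [intervalIntegral.integral_mul_ite_of_forall_Ioc (p := (f · ≠ 0)) hst hne,
    integral_exp_neg_mul hC.ne', show f s = 0 from hfs, mul_zero, zero_add] at hineq_st
  have hΔ : 0 < exp (-C * s) - exp (-C * t) :=
    sub_pos.mpr (exp_lt_exp.mpr (mul_lt_mul_of_neg_left hlt (neg_neg_of_pos hC)))
  have hft_pos : 0 < exp (-C * t) * f t :=
    mul_pos (exp_pos _) ((hnonneg t (ht₀.trans ht)).lt_of_ne' hft)
  have hdiss : (exp (-C * s) - exp (-C * t)) * Y < K * ((exp (-C * s) - exp (-C * t)) / C) :=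
    calc (exp (-C * s) - exp (-C * t)) * Y
        < (exp (-C * s) - exp (-C * t)) * (K / C) :=
          mul_lt_mul_of_pos_left ((lt_div_iff₀ hC).mpr (by linarith)) hΔ
      _ = K * ((exp (-C * s) - exp (-C * t)) / C) := by ring
  linarith

/-- Absorption property: if `f ≥ 0` is continuous, satisfies for all `0 ≤ s ≤ t`
`e^{-C*t} f(t) + K ∫_s^t e^{-C*r} 1_{f(r)≠0} dr ≤ e^{-C*s} f(s) + (e^{-C*s} - e^{-C*t}) Y`
with `K > C*Y`, and `f(t₀) = 0`, then `f(t) = 0` for all `t ≥ t₀`. -/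
theorem absorption
    (C K Y : ℝ) (hC : 0 < C) (hK : 0 < K) (hY : 0 ≤ Y)
    (f : ℝ → ℝ) (hcont : Continuous f) (hnonneg : ∀ t, 0 ≤ t → 0 ≤ f t)
    (hineq : ∀ s t : ℝ, 0 ≤ s → s ≤ t →
      Real.exp (-C * t) * f t +
        K * ∫ r in s..t, Real.exp (-C * r) * (if f r ≠ 0 then 1 else 0) ≤
      Real.exp (-C * s) * f s + (Real.exp (-C * s) - Real.exp (-C * t)) * Y)
    (hKY : K > C * Y)
    (t₀ : ℝ) (ht₀ : 0 ≤ t₀) (hf₀ : f t₀ = 0) :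
    ∀ t, t₀ ≤ t → f t = 0 :=
  absorption_general C K Y hC f hcont hnonneg hineq hKY t₀ ht₀ hf₀
end
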